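/- arXiv:2603.28171 — 4 statements merged into one kernel-verified Lean document; each statement's English description precedes it below -/
import Mathlib

section
/- For every integer n ≥ 1 and every partition λ of n, τ_n(λ) = τ_n(λ'). Consequently, for every integer r ≥ 0, the sets T_{≥r}(n) and T_{=r}(n) are invariant under conjugation (λ belongs to the set if and only if λ' does), and for every integer r ≥ 1 the shell Sh_r(n) and the core Core_r(n) are invariant under conjugation. -/
open SimpleGraph

/-- `IsTransfer s t` says that the multiset `t` is obtained from the multiset `s` by an
elementary transfer of one unit: remove one unit from some part `a` of `s` (deleting the
part if it becomes `0`) and add one unit to another part `b` of `s`, or create a new part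
equal to `1` (encoded by `b = 0`). -/
def IsTransfer (s t : Multiset ℕ) : Prop :=
  ∃ a ∈ s, ∃ b, (b ∈ s.erase a ∨ b = 0) ∧
    t = ((s.erase a).erase b + (if a = 1 then 0 else {a - 1})) + {b + 1}

/-- The partition graph `G_n`: vertices are the partitions of `n`, and two distinct
partitions are adjacent iff one is obtained from the other by an elementary transfer. -/
def partitionGraph (n : ℕ) : SimpleGraph (Nat.Partition n) :=
  SimpleGraph.fromRel fun l m => IsTransfer l.parts m.parts

/-- The maximum size of a clique of `G_n` containing the partition `l`. -/
noncomputable def maxCliqueSizeThrough (n : ℕ) (l : Nat.Partition n) : ℕ :=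
  sSup {m | ∃ s : Finset (Nat.Partition n),
    (partitionGraph n).IsClique ↑s ∧ l ∈ s ∧ s.card = m}

/-- The simplicial thickness `τ_n(l)`: `m` where `m + 1` is the maximum size of a clique
of `G_n` containing `l`. -/
noncomputable def tau (n : ℕ) (l : Nat.Partition n) : ℕ := maxCliqueSizeThrough n l - 1

/-- The threshold thick zone `T_{≥ r}(n)`. -/
def TGe (n r : ℕ) : Set (Nat.Partition n) := {l | r ≤ tau n l}

/-- The exact regime `T_{= r}(n)`. -/
def TEq (n r : ℕ) : Set (Nat.Partition n) := {l | tau n l = r}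

lemma conjParts_sum_aux (N : ℕ) (s : Multiset ℕ) (h : ∀ p ∈ s, p ≤ N) :
    ∑ k ∈ Finset.range N, (s.filter fun p => k + 1 ≤ p).card = s.sum := by
  induction s using Multiset.induction_on with
  | empty => simp
  | cons a s ih =>
    have ha : a ≤ N := h a (Multiset.mem_cons_self a s)
    have hs : ∀ p ∈ s, p ≤ N := fun p hp => h p (Multiset.mem_cons_of_mem hp)
    have hstep : ∀ k, ((a ::ₘ s).filter fun p => k + 1 ≤ p).card
        = (s.filter fun p => k + 1 ≤ p).card + (if k + 1 ≤ a then 1 else 0) := by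
      intro k
      rw [Multiset.filter_cons]
      split_ifs <;> simp [add_comm]
    rw [Finset.sum_congr rfl fun k _ => hstep k, Finset.sum_add_distrib, ih hs,
      Multiset.sum_cons]
    have h1 : ∑ k ∈ Finset.range N, (if k + 1 ≤ a then 1 else 0)
        = ((Finset.range N).filter fun k => k + 1 ≤ a).card := by
      rw [Finset.card_filter]
    have hfil : ((Finset.range N).filter fun k => k + 1 ≤ a) = Finset.range a := by
      ext k
      simp only [Finset.mem_filter, Finset.mem_range]
      omega
    rw [h1, hfil, Finset.card_range]
    omega

lemma conjParts_sum (N : ℕ) (s : Multiset ℕ) (h : ∀ p ∈ s, p ≤ N) :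
    (((Multiset.range N).map fun k => (s.filter fun p => k + 1 ≤ p).card).sum) = s.sum := by
  rw [← conjParts_sum_aux N s h, Finset.sum_eq_multiset_sum, Finset.range_val]

/-- The conjugate partition: its `k`-th part is the number of parts of `l` that are `≥ k`. -/
def conj (n : ℕ) (l : Nat.Partition n) : Nat.Partition n :=
  Nat.Partition.ofSums n
    ((Multiset.range n).map fun k => (l.parts.filter fun p => k + 1 ≤ p).card)
    (by
      rw [conjParts_sum n l.parts fun p hp =>
        le_of_le_of_eq (Multiset.le_sum_of_mem hp) l.parts_sum]
      exact l.parts_sum)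

/-- The main chain of `G_n`: the partitions `(n-k, 1^k)` for `0 ≤ k ≤ n-1`. -/
def mainChain (n : ℕ) : Set (Nat.Partition n) :=
  {l | ∃ k ≤ n - 1, l.parts = (n - k) ::ₘ Multiset.replicate k 1}

/-- The left boundary edge of `G_n`: the partitions `(n-k, k)` for `1 ≤ k ≤ ⌊n/2⌋`. -/
def leftEdge (n : ℕ) : Set (Nat.Partition n) :=
  {l | ∃ k, 1 ≤ k ∧ k ≤ n / 2 ∧ l.parts = (n - k) ::ₘ {k}}

/-- The right boundary edge of `G_n`: the partitions `(2^k, 1^{n-2k})` for `1 ≤ k ≤ ⌊n/2⌋`. -/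
def rightEdge (n : ℕ) : Set (Nat.Partition n) :=
  {l | ∃ k, 1 ≤ k ∧ k ≤ n / 2 ∧
    l.parts = Multiset.replicate k 2 + Multiset.replicate (n - 2 * k) 1}

/-- The boundary framework `B_n`. -/
def framework (n : ℕ) : Set (Nat.Partition n) := mainChain n ∪ leftEdge n ∪ rightEdge n

/-- The outer shell `Sh_r(n)`: vertices of connected components of the subgraph of `G_n`
induced on `T_{≥ r}(n)` that meet the boundary framework `B_n`. -/
def Sh (n r : ℕ) : Set (Nat.Partition n) :=
  {l | ∃ h : l ∈ TGe n r, ∃ b : TGe n r, (b : Nat.Partition n) ∈ framework n ∧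
    (SimpleGraph.induce (TGe n r) (partitionGraph n)).Reachable ⟨l, h⟩ b}

/-- The inner core `Core_r(n)`. -/
def Core (n r : ℕ) : Set (Nat.Partition n) := TGe n r \ Sh n r

/-- The maximum simplicial thickness `τ_max(n)`. -/
noncomputable def tauMax (n : ℕ) : ℕ := sSup (Set.range (tau n))

/-- The maximal-thickness locus `M_n`. -/
noncomputable def maxLocus (n : ℕ) : Set (Nat.Partition n) := {l | tau n l = tauMax n}

/-!
Record a partition by its column lengths `countGe k = #{parts ≥ k}`; conjugation transposes the
Young diagram: `k ≤ λ'.countGe j ↔ k ≤ n ∧ j ≤ λ.countGe k`. An elementary transfer removes the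
last cell of a row of length `a` and appends a cell to a row of length `c - 1`, i.e. it moves
one cell from column `a` to column `c`. Transposed, this moves a cell from column `λ.countGe a`
to column `λ.countGe c + 1` of `λ'`, which is again an elementary transfer. So conjugation is an
involutive automorphism of `G_n`; it therefore preserves the clique sizes through a vertex, hence
`τ_n`, `T_{≥r}(n)` and `T_{=r}(n)`. It maps the main chain onto itself and swaps the two boundary
edges, so it preserves `B_n`, and thus maps components of `T_{≥r}(n)` meeting `B_n` to such
components.
-/

lemma Finset.sum_add_sum_eq_of_eqOn_sdiff {ι M : Type*} [AddCommMonoid M] [DecidableEq ι]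
    {S T : Finset ι} {f g : ι → M} (hT : T ⊆ S) (h : ∀ i ∈ S \ T, f i = g i) :
    ∑ i ∈ S, f i + ∑ i ∈ T, g i = ∑ i ∈ S, g i + ∑ i ∈ T, f i := by
  rw [← Finset.sum_sdiff hT (f := f), ← Finset.sum_sdiff hT (f := g), Finset.sum_congr rfl h]
  abel

namespace Multiset

/-- The length of the `k`-th column of the Young diagram of `s`. -/
def countGe (s : Multiset ℕ) (k : ℕ) : ℕ := (s.filter (k ≤ ·)).card

variable {s t : Multiset ℕ} {a b c : ℕ}

@[simp] lemma countGe_zero (k : ℕ) : (0 : Multiset ℕ).countGe k = 0 := rfl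

lemma countGe_add (s t : Multiset ℕ) (k : ℕ) :
    (s + t).countGe k = s.countGe k + t.countGe k := by
  simp [countGe, filter_add]

lemma countGe_cons (a : ℕ) (s : Multiset ℕ) (k : ℕ) :
    (a ::ₘ s).countGe k = s.countGe k + if k ≤ a then 1 else 0 := by
  rw [countGe, filter_cons]
  split_ifs <;> simp [countGe, add_comm]

lemma countGe_singleton (a k : ℕ) : ({a} : Multiset ℕ).countGe k = if k ≤ a then 1 else 0 := by
  simpa [countGe] using countGe_cons a 0 k

lemma countGe_replicate (m a k : ℕ) :
    (replicate m a).countGe k = if k ≤ a then m else 0 := by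
  induction m with
  | zero => simp [countGe]
  | succ m ih => rw [replicate_succ, countGe_cons, ih]; split_ifs <;> omega

lemma countGe_antitone (s : Multiset ℕ) : Antitone s.countGe :=
  fun _ _ hjk => card_le_card (monotone_filter_right s fun _ h => hjk.trans h)

lemma countGe_erase (h : a ∈ s) (k : ℕ) :
    (s.erase a).countGe k + (if k ≤ a then 1 else 0) = s.countGe k := by
  conv_rhs => rw [← cons_erase h, countGe_cons]

lemma count_add_countGe_succ (s : Multiset ℕ) (k : ℕ) :
    s.count k + s.countGe (k + 1) = s.countGe k := by
  induction s using Multiset.induction_on with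
  | empty => simp [countGe]
  | cons a s ih => rw [count_cons, countGe_cons, countGe_cons]; split_ifs <;> omega

lemma eq_of_countGe_eq (hs : 0 ∉ s) (ht : 0 ∉ t) (h : ∀ k, 1 ≤ k → s.countGe k = t.countGe k) :
    s = t := by
  ext k
  rcases Nat.eq_zero_or_pos k with rfl | hk
  · rw [count_eq_zero.2 hs, count_eq_zero.2 ht]
  · have := count_add_countGe_succ s k
    have := count_add_countGe_succ t k
    have := h k hk
    have := h (k + 1) (by omega)
    omega

/-- `t` arises from `s` by moving one cell of the Young diagram from column `a` to column `c`. -/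
def MovesCell (s t : Multiset ℕ) (a c : ℕ) : Prop :=
  ∀ k, 1 ≤ k → t.countGe k + (if k = a then 1 else 0) = s.countGe k + (if k = c then 1 else 0)

lemma zero_notMem_transfer (hs : 0 ∉ s) (ha : a ∈ s) :
    0 ∉ ((s.erase a).erase b + (if a = 1 then 0 else {a - 1})) + {b + 1} := by
  have ha1 : 1 ≤ a := Nat.pos_of_ne_zero fun h => hs (h ▸ ha)
  have : 0 ∉ (s.erase a).erase b := fun h => hs (mem_of_mem_erase (mem_of_mem_erase h))
  split_ifs <;> simp [this]
  omega

lemma movesCell_transfer (hs : 0 ∉ s) (ha : a ∈ s) (hb : b ∈ s.erase a ∨ b = 0) :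
    MovesCell s (((s.erase a).erase b + (if a = 1 then 0 else {a - 1})) + {b + 1}) a (b + 1) := by
  intro k hk
  have ha1 : 1 ≤ a := Nat.pos_of_ne_zero fun h => hs (h ▸ ha)
  have hea := countGe_erase ha k
  rcases hb with hb | rfl
  · have heb := countGe_erase hb k
    split_ifs at hea heb ⊢ <;>
      simp only [countGe_add, countGe_singleton, countGe_zero] <;> split_ifs <;> omega
  · rw [erase_of_notMem fun h => hs (mem_of_mem_erase h)]
    split_ifs at hea ⊢ <;>
      simp only [countGe_add, countGe_singleton, countGe_zero] <;> split_ifs <;> omega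

lemma MovesCell.ne (hs : 0 ∉ s) (ht : 0 ∉ t) (hst : s ≠ t) (h : MovesCell s t a c) : a ≠ c := by
  rintro rfl
  exact hst (eq_of_countGe_eq hs ht fun k hk => by have := h k hk; omega)

lemma MovesCell.isTransfer (hs : 0 ∉ s) (ht : 0 ∉ t) (ha : 1 ≤ a) (hc : 1 ≤ c) (hac : a ≠ c)
    (h : MovesCell s t a c) : IsTransfer s t := by
  have ha_mem : a ∈ s := by
    have h₁ := h a ha
    have h₂ := h (a + 1) (by omega)
    have := countGe_antitone t (Nat.le_add_right a 1)
    have := count_add_countGe_succ s a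
    rw [← count_pos]
    split_ifs at h₁ h₂ <;> omega
  have hb : c - 1 ∈ s.erase a ∨ c - 1 = 0 := by
    rcases Nat.lt_or_ge c 2 with hc2 | hc2
    · exact Or.inr (by omega)
    have h₁ := h (c - 1) (by omega)
    have h₂ := h c hc
    have := countGe_antitone t (Nat.sub_le c 1)
    have := count_add_countGe_succ s (c - 1)
    rw [Nat.sub_add_cancel hc] at this
    left
    rw [← count_pos]
    by_cases hca : c - 1 = a
    · rw [← hca, count_erase_self]
      split_ifs at h₁ h₂ <;> omega
    · rw [count_erase_of_ne hca]
      split_ifs at h₁ h₂ <;> omega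
  refine ⟨a, ha_mem, c - 1, hb, eq_of_countGe_eq ht (zero_notMem_transfer hs ha_mem) fun k hk => ?_⟩
  have := movesCell_transfer hs ha_mem hb k hk
  have := h k hk
  rw [Nat.sub_add_cancel hc] at *
  omega

theorem isTransfer_iff_exists_movesCell (hs : 0 ∉ s) (ht : 0 ∉ t) (hst : s ≠ t) :
    IsTransfer s t ↔ ∃ a c, 1 ≤ a ∧ 1 ≤ c ∧ MovesCell s t a c := by
  constructor
  · rintro ⟨a, ha, b, hb, rfl⟩
    exact ⟨a, b + 1, Nat.pos_of_ne_zero fun h => hs (h ▸ ha), by omega,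
      movesCell_transfer hs ha hb⟩
  · rintro ⟨a, c, ha, hc, h⟩
    exact h.isTransfer hs ht ha hc (h.ne hs ht hst)

end Multiset

lemma SimpleGraph.IsClique.finsetMap_of_embedding {V W : Type*} {G : SimpleGraph V}
    {H : SimpleGraph W} {s : Finset V} (hs : G.IsClique (s : Set V)) (f : G ↪g H) :
    H.IsClique (s.map f.toEmbedding : Set W) := by
  rw [Finset.coe_map]
  rintro _ ⟨x, hx, rfl⟩ _ ⟨y, hy, rfl⟩ hxy
  exact f.map_adj_iff.2 (hs hx hy (ne_of_apply_ne _ hxy))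

namespace Nat.Partition

open Multiset
open scoped Finset

variable {n : ℕ}

lemma zero_notMem_parts (l : n.Partition) : 0 ∉ l.parts :=
  fun h => (l.parts_pos h).false

lemma countGe_parts_le (l : n.Partition) (k : ℕ) : l.parts.countGe k ≤ n :=
  calc l.parts.countGe k ≤ l.parts.card := card_le_card (filter_le _ _)
    _ ≤ l.parts.sum := by simpa using card_nsmul_le_sum fun _ h => l.parts_pos h
    _ = n := l.parts_sum

lemma le_of_countGe_parts_pos (l : n.Partition) {k : ℕ} (h : 0 < l.parts.countGe k) : k ≤ n := by
  obtain ⟨p, hp⟩ := card_pos_iff_exists_mem.1 h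
  rw [mem_filter] at hp
  exact hp.2.trans (le_of_mem_parts hp.1)

lemma countGe_conj_parts (l : n.Partition) {k : ℕ} (hk : 1 ≤ k) :
    (conj n l).parts.countGe k = #{j ∈ Finset.Icc 1 n | k ≤ l.parts.countGe j} := by
  have hIcc : Finset.Icc 1 n = (Finset.range n).map (addRightEmbedding 1) := by
    rw [Finset.range_eq_Ico, Finset.map_add_right_Ico]; rfl
  rw [hIcc, Finset.filter_map, Finset.card_map, conj, ofSums_parts, countGe, filter_filter,
    filter_congr fun x _ => and_iff_left_of_imp fun (h : k ≤ x) => by omega, filter_map, card_map]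
  rfl

lemma le_countGe_conj_parts_iff (l : n.Partition) {j k : ℕ} (hj : 1 ≤ j) (hk : 1 ≤ k) :
    k ≤ (conj n l).parts.countGe j ↔ k ≤ n ∧ j ≤ l.parts.countGe k := by
  rw [countGe_conj_parts l hj]
  constructor
  · intro hcard
    refine ⟨hcard.trans ((Finset.card_filter_le _ _).trans (by simp)), ?_⟩
    by_contra! hlt
    have hsub : {i ∈ Finset.Icc 1 n | j ≤ l.parts.countGe i} ⊆ Finset.Icc 1 (k - 1) := by
      intro i hi
      rw [Finset.mem_filter, Finset.mem_Icc] at hi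
      have := countGe_antitone l.parts (a := k) (b := i)
      rw [Finset.mem_Icc]
      omega
    have := Finset.card_le_card hsub
    simp only [Nat.card_Icc] at this
    omega
  · rintro ⟨hkn, hjk⟩
    have hsub : Finset.Icc 1 k ⊆ {i ∈ Finset.Icc 1 n | j ≤ l.parts.countGe i} := by
      intro i hi
      rw [Finset.mem_Icc] at hi
      rw [Finset.mem_filter, Finset.mem_Icc]
      exact ⟨⟨hi.1, hi.2.trans hkn⟩, hjk.trans (countGe_antitone l.parts hi.2)⟩
    simpa using Finset.card_le_card hsub

lemma conj_parts_eq_of_forall_le_iff {l : n.Partition} {t : Multiset ℕ} (ht : 0 ∉ t)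
    (h : ∀ j k, 1 ≤ j → 1 ≤ k → (k ≤ t.countGe j ↔ k ≤ n ∧ j ≤ l.parts.countGe k)) :
    (conj n l).parts = t := by
  refine eq_of_countGe_eq (zero_notMem_parts _) ht fun j hj => eq_of_forall_le_iff fun k => ?_
  rcases Nat.eq_zero_or_pos k with rfl | hk
  · simp
  · rw [le_countGe_conj_parts_iff l hj hk, h j k hj hk]

lemma conj_conj (l : n.Partition) : conj n (conj n l) = l := by
  refine Nat.Partition.ext <|
    conj_parts_eq_of_forall_le_iff (zero_notMem_parts l) fun j k hj hk => ?_
  rw [le_countGe_conj_parts_iff l hk hj]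
  exact ⟨fun h => ⟨h.trans (countGe_parts_le l j), le_of_countGe_parts_pos l (by omega), h⟩,
    fun h => h.2.2⟩

lemma conj_involutive : Function.Involutive (conj n) := conj_conj

lemma conj_injective : Function.Injective (conj n) := conj_involutive.injective

lemma movesCell_conj {l m : n.Partition} {a c : ℕ} (ha : 1 ≤ a) (hc : 1 ≤ c) (hac : a ≠ c)
    (h : MovesCell l.parts m.parts a c) :
    MovesCell (conj n l).parts (conj n m).parts (l.parts.countGe a) (l.parts.countGe c + 1) := by
  intro j hj
  have hFa := h a ha
  have hFc := h c hc
  rw [if_pos rfl, if_neg hac] at hFa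
  rw [if_neg hac.symm, if_pos rfl] at hFc
  have hpair : {a, c} ⊆ Finset.Icc 1 n := by
    have ha_n := le_of_countGe_parts_pos l (k := a) (by omega)
    have hc_n := le_of_countGe_parts_pos m (k := c) (by omega)
    intro i hi
    simp only [Finset.mem_insert, Finset.mem_singleton] at hi
    rw [Finset.mem_Icc]
    omega
  have key := Finset.sum_add_sum_eq_of_eqOn_sdiff hpair
    (f := fun i => if j ≤ m.parts.countGe i then 1 else 0)
    (g := fun i => if j ≤ l.parts.countGe i then 1 else 0) fun i hi => by
      simp only [Finset.mem_sdiff, Finset.mem_Icc, Finset.mem_insert, Finset.mem_singleton,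
        not_or] at hi
      have := h i hi.1.1
      simp only [if_neg hi.2.1, if_neg hi.2.2, add_zero] at this
      rw [this]
  rw [Finset.sum_pair hac, Finset.sum_pair hac] at key
  rw [countGe_conj_parts m hj, countGe_conj_parts l hj, Finset.card_filter, Finset.card_filter]
  split_ifs at key ⊢ <;> omega

lemma isTransfer_conj {l m : n.Partition} (hlm : l ≠ m) (h : IsTransfer l.parts m.parts) :
    IsTransfer (conj n l).parts (conj n m).parts := by
  have hlm' : l.parts ≠ m.parts := fun e => hlm (Nat.Partition.ext e)
  have hconj : (conj n l).parts ≠ (conj n m).parts :=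
    fun e => hlm (conj_injective (Nat.Partition.ext e))
  obtain ⟨a, c, ha, hc, hmove⟩ :=
    (isTransfer_iff_exists_movesCell (zero_notMem_parts l) (zero_notMem_parts m) hlm').1 h
  have hac := hmove.ne (zero_notMem_parts l) (zero_notMem_parts m) hlm'
  have hFa := hmove a ha
  rw [if_pos rfl, if_neg hac] at hFa
  exact (isTransfer_iff_exists_movesCell (zero_notMem_parts _) (zero_notMem_parts _) hconj).2
    ⟨_, _, by omega, by omega, movesCell_conj ha hc hac hmove⟩

lemma partitionGraph_adj_conj {l m : n.Partition} (h : (partitionGraph n).Adj l m) :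
    (partitionGraph n).Adj (conj n l) (conj n m) := by
  rw [partitionGraph, fromRel_adj] at h ⊢
  obtain ⟨hne, h | h⟩ := h
  · exact ⟨conj_injective.ne hne, Or.inl (isTransfer_conj hne h)⟩
  · exact ⟨conj_injective.ne hne, Or.inr (isTransfer_conj hne.symm h)⟩

def conjIso (n : ℕ) : partitionGraph n ≃g partitionGraph n where
  toEquiv := conj_involutive.toPerm _
  map_rel_iff' {l m} := ⟨fun h => by simpa [conj_conj] using partitionGraph_adj_conj h,
    partitionGraph_adj_conj⟩

lemma maxCliqueSizeThrough_conj (l : n.Partition) :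
    maxCliqueSizeThrough n (conj n l) = maxCliqueSizeThrough n l := by
  have key : ∀ l : n.Partition,
      {m | ∃ s : Finset n.Partition, (partitionGraph n).IsClique ↑s ∧ l ∈ s ∧ s.card = m} ⊆
      {m | ∃ s : Finset n.Partition,
        (partitionGraph n).IsClique ↑s ∧ conj n l ∈ s ∧ s.card = m} := by
    rintro l _ ⟨s, hs, hl, rfl⟩
    exact ⟨_, hs.finsetMap_of_embedding (conjIso n).toEmbedding, Finset.mem_map_of_mem _ hl,
      Finset.card_map _⟩
  have key' := key (conj n l)
  rw [conj_conj] at key'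
  unfold maxCliqueSizeThrough
  rw [key'.antisymm (key l)]

lemma tau_conj (l : n.Partition) : tau n (conj n l) = tau n l := by
  rw [tau, tau, maxCliqueSizeThrough_conj]

lemma conj_mem_TGe_iff {r : ℕ} {l : n.Partition} : conj n l ∈ TGe n r ↔ l ∈ TGe n r := by
  rw [TGe, Set.mem_ofPred_eq, Set.mem_ofPred_eq, tau_conj]

lemma conj_parts_of_mainChain {l : n.Partition} {k : ℕ}
    (hl : l.parts = (n - k) ::ₘ replicate k 1) :
    (conj n l).parts = (k + 1) ::ₘ replicate (n - 1 - k) 1 := by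
  have := l.parts_pos (hl ▸ mem_cons_self _ _)
  refine conj_parts_eq_of_forall_le_iff (by simp [mem_replicate]) fun j i hj hi => ?_
  rw [hl, countGe_cons, countGe_cons, countGe_replicate, countGe_replicate]
  split_ifs <;> omega

lemma conj_parts_of_leftEdge {l : n.Partition} {k : ℕ} (hk : 1 ≤ k) (hkn : k ≤ n / 2)
    (hl : l.parts = (n - k) ::ₘ {k}) :
    (conj n l).parts = replicate k 2 + replicate (n - 2 * k) 1 := by
  refine conj_parts_eq_of_forall_le_iff (by simp [mem_replicate]) fun j i hj hi => ?_
  rw [hl, countGe_cons, countGe_singleton, countGe_add, countGe_replicate, countGe_replicate]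
  split_ifs <;> omega

lemma conj_parts_of_rightEdge {l : n.Partition} {k : ℕ} (hk : 1 ≤ k) (hkn : k ≤ n / 2)
    (hl : l.parts = replicate k 2 + replicate (n - 2 * k) 1) :
    (conj n l).parts = (n - k) ::ₘ {k} := by
  refine conj_parts_eq_of_forall_le_iff (by simp; omega) fun j i hj hi => ?_
  rw [hl, countGe_cons, countGe_singleton, countGe_add, countGe_replicate, countGe_replicate]
  split_ifs <;> omega

lemma conj_mem_framework {l : n.Partition} (hl : l ∈ framework n) : conj n l ∈ framework n := by
  rcases hl with (⟨k, hk, hl⟩ | ⟨k, hk, hkn, hl⟩) | ⟨k, hk, hkn, hl⟩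
  · have := l.parts_pos (hl ▸ mem_cons_self _ _)
    refine Or.inl (Or.inl ⟨n - 1 - k, by omega, ?_⟩)
    rw [conj_parts_of_mainChain hl, show n - (n - 1 - k) = k + 1 by omega]
  · exact Or.inr ⟨k, hk, hkn, conj_parts_of_leftEdge hk hkn hl⟩
  · exact Or.inl (Or.inr ⟨k, hk, hkn, conj_parts_of_rightEdge hk hkn hl⟩)

lemma conj_mem_Sh {r : ℕ} {l : n.Partition} (hl : l ∈ Sh n r) : conj n l ∈ Sh n r := by
  obtain ⟨hmem, b, hb, hreach⟩ := hl
  have hmaps : Set.MapsTo (conjIso n) (TGe n r) (TGe n r) := fun _ => conj_mem_TGe_iff.2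
  exact ⟨hmaps hmem, ⟨conj n b, hmaps b.2⟩, conj_mem_framework hb,
    hreach.map (induceHom (conjIso n).toHom hmaps)⟩

lemma conj_mem_Sh_iff {r : ℕ} {l : n.Partition} : conj n l ∈ Sh n r ↔ l ∈ Sh n r :=
  ⟨fun h => conj_conj l ▸ conj_mem_Sh h, conj_mem_Sh⟩

end Nat.Partition

open Nat.Partition in
theorem stmt7_general (n : ℕ) :
    (∀ l : Nat.Partition n, tau n l = tau n (conj n l)) ∧
    (∀ r : ℕ, ∀ l : Nat.Partition n,
      (l ∈ TGe n r ↔ conj n l ∈ TGe n r) ∧ (l ∈ TEq n r ↔ conj n l ∈ TEq n r)) ∧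
    (∀ r : ℕ, 1 ≤ r → ∀ l : Nat.Partition n,
      (l ∈ Sh n r ↔ conj n l ∈ Sh n r) ∧ (l ∈ Core n r ↔ conj n l ∈ Core n r)) := by
  refine ⟨fun l => (tau_conj l).symm, fun r l => ⟨conj_mem_TGe_iff.symm, ?_⟩,
    fun r _ l => ⟨conj_mem_Sh_iff.symm, ?_⟩⟩
  · rw [TEq, Set.mem_ofPred_eq, Set.mem_ofPred_eq, tau_conj]
  · rw [Core, Set.mem_sdiff, Set.mem_sdiff, conj_mem_TGe_iff, conj_mem_Sh_iff]

/-- For every `n ≥ 1` and every partition `l` of `n`, `τ_n(l) = τ_n(l')`.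
Consequently, for every `r ≥ 0` the sets `T_{≥r}(n)` and `T_{=r}(n)` are invariant under
conjugation, and for every `r ≥ 1` the shell `Sh_r(n)` and the core `Core_r(n)` are
invariant under conjugation. -/
theorem stmt7 (n : ℕ) (hn : 1 ≤ n) :
    (∀ l : Nat.Partition n, tau n l = tau n (conj n l)) ∧
    (∀ r : ℕ, ∀ l : Nat.Partition n,
      (l ∈ TGe n r ↔ conj n l ∈ TGe n r) ∧ (l ∈ TEq n r ↔ conj n l ∈ TEq n r)) ∧
    (∀ r : ℕ, 1 ≤ r → ∀ l : Nat.Partition n,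
      (l ∈ Sh n r ↔ conj n l ∈ Sh n r) ∧ (l ∈ Core n r ↔ conj n l ∈ Core n r)) :=
  stmt7_general n
end

section
/- For every integer n ≥ 2, if Sh_2(n) is nonempty, then every connected component of the subgraph of G_n induced on T_{≥2}(n) that contains a vertex of the boundary framework B_n in fact contains a vertex of B_n distinct from both antennas (n) and (1^n). -/
open SimpleGraph

lemma tau_le_one_of_unique (n : ℕ) (l : Nat.Partition n)
    (huniq : ∀ x y, (partitionGraph n).Adj l x → (partitionGraph n).Adj l y → x = y) :
    tau n l ≤ 1 := by
  have hsup : maxCliqueSizeThrough n l ≤ 2 := by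
    apply csSup_le
    · exact ⟨1, {l}, by simp, by simp, by simp⟩
    · rintro k ⟨s, hs, hl, rfl⟩
      by_cases hex : ∃ x ∈ s, x ≠ l
      · obtain ⟨m0, hm0, hne0⟩ := hex
        have hadj0 : (partitionGraph n).Adj l m0 :=
          hs (Finset.mem_coe.mpr hl) (Finset.mem_coe.mpr hm0) (Ne.symm hne0)
        have hsub : s ⊆ {l, m0} := by
          intro x hx
          rcases eq_or_ne x l with rfl | hxl
          · simp
          · have hadj : (partitionGraph n).Adj l x :=
              hs (Finset.mem_coe.mpr hl) (Finset.mem_coe.mpr hx) (Ne.symm hxl)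
            simp [huniq x m0 hadj hadj0]
        exact (Finset.card_le_card hsub).trans ((Finset.card_insert_le _ _).trans (by simp))
      · push_neg at hex
        have hsub : s ⊆ {l} := fun x hx => by simp [hex x hx]
        exact (Finset.card_le_card hsub).trans (by simp)
  unfold tau
  omega

lemma adj_top (n : ℕ) (hn : 2 ≤ n) (l m : Nat.Partition n) (hl : l.parts = {n})
    (h : (partitionGraph n).Adj l m) : m.parts = (n - 1) ::ₘ {1} := by
  rw [partitionGraph, SimpleGraph.fromRel_adj] at h
  have hn1 : n ≠ 1 := by omega
  obtain ⟨hne, h | h⟩ := h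
  · obtain ⟨a, ha, b, hb, heq⟩ := h
    rw [hl] at ha hb heq
    rw [Multiset.mem_singleton] at ha
    subst ha
    simp only [Multiset.erase_singleton, Multiset.notMem_zero, false_or] at hb
    subst hb
    simp [Multiset.erase_singleton, hn1, Multiset.singleton_add] at heq
    simpa [Multiset.singleton_add] using heq
  · obtain ⟨a, ha, b, hb, heq⟩ := h
    rw [hl] at heq
    have hcard := congrArg Multiset.card heq
    simp only [Multiset.card_singleton, Multiset.card_add] at hcard
    have ha1 : a = 1 := by
      by_contra ha1
      simp [ha1] at hcard
    subst ha1
    have heq' : ({n} : Multiset ℕ) = (m.parts.erase 1).erase b + {b + 1} := by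
      simpa using heq
    have hcard' := congrArg Multiset.card heq'
    simp only [Multiset.card_singleton, Multiset.card_add] at hcard'
    have hzero : (m.parts.erase 1).erase b = 0 := by
      rw [← Multiset.card_eq_zero]
      omega
    rw [hzero, zero_add, Multiset.singleton_inj] at heq'
    have heq := heq'
    have hb' : b ∈ m.parts.erase 1 := by
      rcases hb with hb | hb
      · exact hb
      · omega
    have h1 : m.parts.erase 1 = {b} := by
      rw [← Multiset.cons_erase hb', hzero]
      rfl
    have h2 : m.parts = 1 ::ₘ {b} := by
      rw [← Multiset.cons_erase ha, h1]
    rw [h2]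
    have hbn : b = n - 1 := by omega
    subst hbn
    exact Multiset.cons_swap 1 (n - 1) 0


lemma replicate_one_erase (k : ℕ) (hk : 1 ≤ k) :
    (Multiset.replicate k 1).erase 1 = Multiset.replicate (k - 1) 1 := by
  obtain ⟨j, rfl⟩ : ∃ j, k = j + 1 := ⟨k - 1, by omega⟩
  rw [Multiset.replicate_succ, Multiset.erase_cons_head]
  simp

lemma adj_bot (n : ℕ) (hn : 2 ≤ n) (l m : Nat.Partition n)
    (hl : l.parts = Multiset.replicate n 1)
    (h : (partitionGraph n).Adj l m) : m.parts = 2 ::ₘ Multiset.replicate (n - 2) 1 := by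
  rw [partitionGraph, SimpleGraph.fromRel_adj] at h
  obtain ⟨hne, h | h⟩ := h
  · obtain ⟨a, ha, b, hb, heq⟩ := h
    rw [hl] at ha hb heq
    have ha1 : a = 1 := Multiset.eq_of_mem_replicate ha
    subst ha1
    rw [replicate_one_erase n (by omega), if_pos rfl, add_zero] at heq
    rw [replicate_one_erase n (by omega)] at hb
    rcases hb with hb | hb
    · have hb1 : b = 1 := Multiset.eq_of_mem_replicate hb
      subst hb1
      rw [replicate_one_erase (n - 1) (by omega)] at heq
      rw [heq, add_comm, Multiset.singleton_add]
      simp only [show (1 : ℕ) + 1 = 2 from rfl, show n - 1 - 1 = n - 2 from by omega]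
    · subst hb
      rw [Multiset.erase_of_notMem (by
        intro h0
        have := Multiset.eq_of_mem_replicate h0
        omega)] at heq
      exfalso
      apply hne
      apply Nat.Partition.ext
      rw [hl, heq, add_comm, Multiset.singleton_add, ← Multiset.replicate_succ]
      congr 1
      omega
  · obtain ⟨a, ha, b, hb, heq⟩ := h
    rw [hl] at heq
    have hb1 : b = 0 := by
      have : b + 1 ∈ Multiset.replicate n 1 := by
        rw [heq]
        simp
      have := Multiset.eq_of_mem_replicate this
      omega
    subst hb1
    have h0 : (0 : ℕ) ∉ m.parts.erase a := by
      intro h0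
      exact absurd (m.parts_pos (Multiset.mem_of_mem_erase h0)) (by omega)
    rw [Multiset.erase_of_notMem h0] at heq
    by_cases ha1 : a = 1
    · subst ha1
      rw [if_pos rfl, add_zero] at heq
      exfalso
      apply hne
      apply Nat.Partition.ext
      rw [hl, heq, add_comm, Multiset.singleton_add, Multiset.cons_erase ha]
    · rw [if_neg ha1] at heq
      have ha2 : a = 2 := by
        have : a - 1 ∈ Multiset.replicate n 1 := by
          rw [heq]
          simp
        have h1 := Multiset.eq_of_mem_replicate this
        have := m.parts_pos ha
        omega
      subst ha2
      have hrep : Multiset.replicate n 1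
          = Multiset.replicate (n - 2) 1 + ({1} + {0 + 1}) := by
        rw [show ({1} : Multiset ℕ) + {0 + 1} = Multiset.replicate 2 1 by
          simp [Multiset.replicate_succ, Multiset.singleton_add],
          ← Multiset.replicate_add]
        congr 1
        omega
      rw [hrep, add_assoc] at heq
      have hcancel : m.parts.erase 2 = Multiset.replicate (n - 2) 1 :=
        (add_right_cancel heq.symm)
      rw [← Multiset.cons_erase ha, hcancel]

/-- For every `n ≥ 2`, if `Sh_2(n)` is nonempty, then every connected
component of the subgraph of `G_n` induced on `T_{≥2}(n)` that contains a vertex of the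
boundary framework `B_n` contains a vertex of `B_n` distinct from both antennas. -/
theorem stmt12 (n : ℕ) (hn : 2 ≤ n) (hne : (Sh n 2).Nonempty) :
    ∀ v b : TGe n 2, (b : Nat.Partition n) ∈ framework n →
      (SimpleGraph.induce (TGe n 2) (partitionGraph n)).Reachable v b →
      ∃ c : TGe n 2, (c : Nat.Partition n) ∈ framework n ∧
        (SimpleGraph.induce (TGe n 2) (partitionGraph n)).Reachable v c ∧
        (c : Nat.Partition n).parts ≠ {n} ∧
        (c : Nat.Partition n).parts ≠ Multiset.replicate n 1 := by
  intro v b hb hr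
  refine ⟨b, hb, hr, ?_, ?_⟩
  · intro heq
    have hb2 : 2 ≤ tau n (b : Nat.Partition n) := b.2
    have hle := tau_le_one_of_unique n (b : Nat.Partition n) (fun x y hx hy =>
      Nat.Partition.ext ((adj_top n hn _ x heq hx).trans (adj_top n hn _ y heq hy).symm))
    omega
  · intro heq
    have hb2 : 2 ≤ tau n (b : Nat.Partition n) := b.2
    have hle := tau_le_one_of_unique n (b : Nat.Partition n) (fun x y hx hy =>
      Nat.Partition.ext ((adj_bot n hn _ x heq hx).trans (adj_bot n hn _ y heq hy).symm))
    omega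
end

section
/- For every integer n ≥ 1, the maximal-thickness locus M_n is invariant under conjugation: a partition λ of n belongs to M_n if and only if its conjugate λ' belongs to M_n. -/
open SimpleGraph

/-- Number of parts of `s` that are at least `k`. -/
def Fc (s : Multiset ℕ) (k : ℕ) : ℕ := (s.filter fun p => k ≤ p).card

lemma Fc_cons (a : ℕ) (s : Multiset ℕ) (k : ℕ) :
    Fc (a ::ₘ s) k = Fc s k + if k ≤ a then 1 else 0 := by
  unfold Fc; rw [Multiset.filter_cons]; split_ifs <;> simp [add_comm]

lemma Fc_zero (k : ℕ) : Fc 0 k = 0 := rfl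

lemma Fc_add (s t : Multiset ℕ) (k : ℕ) : Fc (s + t) k = Fc s k + Fc t k := by
  unfold Fc; rw [Multiset.filter_add, Multiset.card_add]

lemma Fc_anti (s : Multiset ℕ) {k k' : ℕ} (h : k ≤ k') : Fc s k' ≤ Fc s k := by
  unfold Fc
  exact Multiset.card_le_card (Multiset.monotone_filter_right s (fun p hp => le_trans h hp))

lemma Fc_count (s : Multiset ℕ) (k : ℕ) : Fc s k = s.count k + Fc s (k + 1) := by
  induction s using Multiset.induction_on with
  | empty => simp [Fc]
  | cons a s ih =>
    rw [Fc_cons, Fc_cons, Multiset.count_cons, ih]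
    split_ifs <;> omega

lemma Fc_erase {s : Multiset ℕ} {a : ℕ} (ha : a ∈ s) (k : ℕ) :
    Fc s k = Fc (s.erase a) k + if k ≤ a then 1 else 0 := by
  conv_lhs => rw [← Multiset.cons_erase ha]
  rw [Fc_cons]

lemma Fc_singleton (a k : ℕ) : Fc {a} k = if k ≤ a then 1 else 0 := by
  unfold Fc; rw [Multiset.filter_singleton]; split_ifs <;> simp

lemma mem_of_Fc {s : Multiset ℕ} {a : ℕ} (h : Fc s (a + 1) < Fc s a) : a ∈ s := by
  have := Fc_count s a
  rw [← Multiset.count_pos]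
  omega

lemma Fc_le_sum {s : Multiset ℕ} {k : ℕ} (hk : 1 ≤ Fc s k) : k ≤ s.sum := by
  obtain ⟨p, hp⟩ := Multiset.card_pos_iff_exists_mem.mp hk
  have hp' := Multiset.mem_filter.mp hp
  exact le_trans hp'.2 (Multiset.le_sum_of_mem hp'.1)

lemma Fc_ext {s t : Multiset ℕ} (hs : ∀ p ∈ s, 0 < p) (ht : ∀ p ∈ t, 0 < p)
    (h : ∀ k, 1 ≤ k → Fc s k = Fc t k) : s = t := by
  ext k
  rcases Nat.eq_zero_or_pos k with rfl | hk
  · rw [Multiset.count_eq_zero_of_notMem, Multiset.count_eq_zero_of_notMem]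
    · intro h0; exact absurd (ht 0 h0) (lt_irrefl 0)
    · intro h0; exact absurd (hs 0 h0) (lt_irrefl 0)
  · have h1 := Fc_count s k
    have h2 := Fc_count t k
    have h3 := h k hk
    have h4 := h (k + 1) (by omega)
    omega

/-- A box move: decrement column `a`, increment column `b`. -/
def BoxMove (s t : Multiset ℕ) : Prop :=
  ∃ a b, 1 ≤ a ∧ 1 ≤ b ∧ a ≠ b ∧ ∀ k, 1 ≤ k →
    (Fc t k : ℤ) = Fc s k - (if k = a then 1 else 0) + (if k = b then 1 else 0)

lemma BoxMove.symm {s t : Multiset ℕ} (h : BoxMove s t) : BoxMove t s := by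
  obtain ⟨a, b, ha, hb, hab, hF⟩ := h
  exact ⟨b, a, hb, ha, hab.symm, fun k hk => by have := hF k hk; split_ifs at * <;> omega⟩

lemma transfer_Fc {s : Multiset ℕ} (hs : ∀ p ∈ s, 0 < p) {a : ℕ} (ha : a ∈ s)
    {b : ℕ} (hb : b ∈ s.erase a ∨ b = 0) :
    ∀ k, 1 ≤ k →
      (Fc (((s.erase a).erase b + (if a = 1 then 0 else {a - 1})) + {b + 1}) k : ℤ)
        = Fc s k - (if k = a then 1 else 0) + (if k = b + 1 then 1 else 0) := by
  intro k hk
  have ha1 : 1 ≤ a := hs a ha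
  have h1 : Fc s k = Fc (s.erase a) k + if k ≤ a then 1 else 0 := Fc_erase ha k
  have h2 : (Fc ((s.erase a).erase b) k : ℤ)
      = Fc (s.erase a) k - if 1 ≤ b ∧ k ≤ b then 1 else 0 := by
    rcases hb with hb | rfl
    · have hb1 : 1 ≤ b := hs b (Multiset.mem_of_mem_erase hb)
      have := Fc_erase hb k
      split_ifs at * <;> omega
    · rw [Multiset.erase_of_notMem]
      · simp
      · intro h0
        exact absurd (hs 0 (Multiset.mem_of_mem_erase h0)) (lt_irrefl 0)
  have h3 : Fc (if a = 1 then (0 : Multiset ℕ) else {a - 1}) k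
      = if a = 1 then 0 else if k ≤ a - 1 then 1 else 0 := by
    by_cases h' : a = 1
    · simp [h', Fc_zero]
    · simp [h', Fc_singleton]
  rw [Fc_add, Fc_add, h3, Fc_singleton]
  push_cast
  rw [h2]
  rcases hb with hb | rfl
  · have hb1 : 1 ≤ b := hs b (Multiset.mem_of_mem_erase hb)
    split_ifs at * <;> omega
  · split_ifs at * <;> omega

lemma transfer_pos {s : Multiset ℕ} (hs : ∀ p ∈ s, 0 < p) {a : ℕ} (ha : a ∈ s) (b : ℕ) :
    ∀ p ∈ ((s.erase a).erase b + (if a = 1 then 0 else {a - 1})) + {b + 1}, 0 < p := by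
  intro p hp
  rcases Multiset.mem_add.mp hp with hp | hp
  · rcases Multiset.mem_add.mp hp with hp | hp
    · exact hs p (Multiset.mem_of_mem_erase (Multiset.mem_of_mem_erase hp))
    · have ha1 : 1 ≤ a := hs a ha
      split_ifs at hp with h'
      · simp at hp
      · rw [Multiset.mem_singleton] at hp
        omega
  · rw [Multiset.mem_singleton] at hp
    omega

lemma isTransfer_boxMove {s t : Multiset ℕ} (hs : ∀ p ∈ s, 0 < p) (ht : ∀ p ∈ t, 0 < p)
    (hne : s ≠ t) (h : IsTransfer s t) : BoxMove s t := by
  obtain ⟨a, ha, b, hb, rfl⟩ := h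
  have ha1 : 1 ≤ a := hs a ha
  refine ⟨a, b + 1, ha1, by omega, ?_, fun k hk => transfer_Fc hs ha hb k hk⟩
  intro hab
  apply hne
  refine Fc_ext hs ht fun k hk => ?_
  subst hab
  have := transfer_Fc hs ha hb k hk
  split_ifs at this ⊢ <;> omega

lemma boxMove_isTransfer {s t : Multiset ℕ} (hs : ∀ p ∈ s, 0 < p) (ht : ∀ p ∈ t, 0 < p)
    (h : BoxMove s t) : IsTransfer s t := by
  obtain ⟨a, b, ha1, hb1, hab, hF⟩ := h
  have hFa := hF a ha1
  have hFa1 := hF (a + 1) (by omega)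
  have hmono_t : Fc t (a + 1) ≤ Fc t a := Fc_anti t (by omega)
  have haS : a ∈ s := by
    apply mem_of_Fc
    split_ifs at hFa hFa1 <;> omega
  have hbS : b - 1 ∈ s.erase a ∨ b - 1 = 0 := by
    rcases Nat.eq_or_lt_of_le hb1 with hb | hb
    · right; omega
    · left
      have hFb := hF b (by omega)
      have hFb1 := hF (b - 1) (by omega)
      have hmono : Fc t b ≤ Fc t (b - 1) := Fc_anti t (by omega)
      have hcount := Fc_count s (b - 1)
      have hb1' : b - 1 + 1 = b := by omega
      rw [hb1'] at hcount
      have e1 : (Fc t b : ℤ) = Fc s b + 1 := by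
        rw [hFb, if_neg (show ¬b = a from fun h => hab h.symm), if_pos rfl]
        ring
      have e2 : (Fc t (b - 1) : ℤ) = Fc s (b - 1) - (if b - 1 = a then 1 else 0) := by
        rw [hFb1, if_neg (show ¬b - 1 = b by omega), add_zero]
      have hcnt : (if b - 1 = a then 1 else 0) + 1 ≤ s.count (b - 1) := by
        split_ifs at e2 ⊢ <;> omega
      rw [← Multiset.count_pos]
      rcases eq_or_ne (b - 1) a with heq | hne'
      · rw [heq, Multiset.count_erase_self, ← heq]
        split_ifs at hcnt <;> omega
      · rw [Multiset.count_erase_of_ne hne']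
        split_ifs at hcnt <;> omega
  refine ⟨a, haS, b - 1, hbS, ?_⟩
  apply Fc_ext ht (transfer_pos hs haS (b - 1))
  intro k hk
  have h1 := transfer_Fc hs haS hbS k hk
  have h2 := hF k hk
  have hb1' : b - 1 + 1 = b := by omega
  rw [hb1'] at h1 ⊢
  split_ifs at h1 h2 ⊢ <;> omega

lemma downclosed_mem_iff (S : Finset ℕ) (h : ∀ i j, j ∈ S → i ≤ j → i ∈ S) (j : ℕ) :
    j ∈ S ↔ j < S.card := by
  constructor
  · intro hj
    have hsub : Finset.range (j + 1) ⊆ S := fun i hi =>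
      h i j hj (Nat.lt_succ_iff.mp (Finset.mem_range.mp hi))
    have := Finset.card_le_card hsub
    rw [Finset.card_range] at this
    omega
  · intro hj
    by_contra hjS
    have hsub : S ⊆ Finset.range j := fun i hi =>
      Finset.mem_range.mpr (by by_contra h'; exact hjS (h j i hi (by omega)))
    have := Finset.card_le_card hsub
    rw [Finset.card_range] at this
    omega

lemma Fc_conj_card {n : ℕ} (l : Nat.Partition n) {k : ℕ} (hk : 1 ≤ k) :
    Fc (conj n l).parts k = ((Finset.range n).filter fun j => k ≤ Fc l.parts (j + 1)).card := by
  have h1 : (conj n l).parts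
      = ((Multiset.range n).map fun j => Fc l.parts (j + 1)).filter (· ≠ 0) := rfl
  rw [Fc, h1, Multiset.filter_filter]
  have h2 : Multiset.filter (fun a => k ≤ a ∧ a ≠ 0)
        ((Multiset.range n).map fun j => Fc l.parts (j + 1))
      = Multiset.filter (fun a => k ≤ a) ((Multiset.range n).map fun j => Fc l.parts (j + 1)) :=
    Multiset.filter_congr (fun x _ => by omega)
  rw [h2, Multiset.filter_map, Multiset.card_map]
  rw [show ((Finset.range n).filter fun j => k ≤ Fc l.parts (j + 1)).card
      = (Multiset.filter (fun j => k ≤ Fc l.parts (j + 1)) (Multiset.range n)).card from rfl]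
  rfl

lemma Fc_galois {n : ℕ} (l : Nat.Partition n) {j k : ℕ} (hj : 1 ≤ j) (hk : 1 ≤ k) :
    j ≤ Fc (conj n l).parts k ↔ k ≤ Fc l.parts j := by
  set S := (Finset.range n).filter fun i => k ≤ Fc l.parts (i + 1) with hS
  have hdc : ∀ i i', i' ∈ S → i ≤ i' → i ∈ S := by
    intro i i' hi' hii
    rw [hS, Finset.mem_filter, Finset.mem_range] at hi' ⊢
    exact ⟨by omega, le_trans hi'.2 (Fc_anti l.parts (by omega))⟩
  have hcard := Fc_conj_card l hk
  have hmem := downclosed_mem_iff S hdc (j - 1)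
  rw [hS, Finset.mem_filter, Finset.mem_range] at hmem
  have hj1 : j - 1 + 1 = j := by omega
  rw [hj1] at hmem
  constructor
  · intro h
    exact (hmem.mpr (by omega)).2
  · intro h
    have hjn : j ≤ n := by
      have := Fc_le_sum (le_trans hk h)
      rwa [l.parts_sum] at this
    have := hmem.mp ⟨by omega, h⟩
    omega

lemma nat_eq_of_one_le_iff {m m' : ℕ} (h : ∀ j, 1 ≤ j → (j ≤ m ↔ j ≤ m')) : m = m' := by
  rcases Nat.eq_zero_or_pos m with hm | hm
  · rcases Nat.eq_zero_or_pos m' with hm' | hm'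
    · omega
    · have := (h m' hm').mpr le_rfl; omega
  · rcases Nat.eq_zero_or_pos m' with hm' | hm'
    · have := (h m hm).mp le_rfl; omega
    · have h1 := (h m hm).mp le_rfl; have h2 := (h m' hm').mpr le_rfl; omega

lemma conjPartition_conj {n : ℕ} (l : Nat.Partition n) : conj n (conj n l) = l := by
  apply Nat.Partition.ext
  apply Fc_ext (fun p hp => (conj n (conj n l)).parts_pos hp) (fun p hp => l.parts_pos hp)
  intro j hj
  apply nat_eq_of_one_le_iff
  intro k hk
  rw [Fc_galois (conj n l) hk hj, Fc_galois l hj hk]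

lemma Fc_conj_sum {n : ℕ} (l : Nat.Partition n) {k : ℕ} (hk : 1 ≤ k) :
    Fc (conj n l).parts k = ∑ j ∈ Finset.range n, if k ≤ Fc l.parts (j + 1) then 1 else 0 := by
  rw [Fc_conj_card l hk, Finset.card_filter]

lemma boxMove_conj {n : ℕ} (l m : Nat.Partition n) (h : BoxMove l.parts m.parts) :
    BoxMove (conj n l).parts (conj n m).parts := by
  obtain ⟨a, b, ha1, hb1, hab, hF⟩ := h
  have hFa := hF a ha1
  rw [if_pos rfl, if_neg hab] at hFa
  have hFb := hF b hb1
  rw [if_pos rfl, if_neg (fun h' => hab h'.symm)] at hFb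
  have hfa1 : 1 ≤ Fc l.parts a := by
    have : (0 : ℤ) ≤ Fc m.parts a := Int.natCast_nonneg _
    omega
  have hAB : Fc l.parts a ≠ Fc l.parts b + 1 := by
    rcases lt_or_gt_of_ne hab with hlt | hlt
    · have h1 : Fc m.parts b ≤ Fc m.parts a := Fc_anti m.parts (le_of_lt hlt)
      omega
    · have h1 : Fc l.parts a ≤ Fc l.parts b := Fc_anti l.parts (le_of_lt hlt)
      omega
  have han : a ≤ n := by
    have := Fc_le_sum hfa1
    rwa [l.parts_sum] at this
  have hbn : b ≤ n := by
    have h1 : 1 ≤ Fc m.parts b := by omega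
    have := Fc_le_sum h1
    rwa [m.parts_sum] at this
  refine ⟨Fc l.parts a, Fc l.parts b + 1, hfa1, by omega, hAB, ?_⟩
  intro k hk
  rw [Fc_conj_sum l hk, Fc_conj_sum m hk]
  push_cast
  have hterm : ∀ x ∈ Finset.range n,
      (if k ≤ Fc m.parts (x + 1) then (1:ℤ) else 0)
        = (if k ≤ Fc l.parts (x + 1) then (1:ℤ) else 0)
          - (if x = a - 1 then (if k = Fc l.parts a then (1:ℤ) else 0) else 0)
          + (if x = b - 1 then (if k = Fc l.parts b + 1 then (1:ℤ) else 0) else 0) := by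
    intro x _
    rcases eq_or_ne x (a - 1) with rfl | hxa
    · have hx1 : a - 1 + 1 = a := by omega
      have hxb : ¬(a - 1 = b - 1) := by omega
      rw [hx1, if_pos rfl, if_neg hxb]
      split_ifs <;> omega
    · rcases eq_or_ne x (b - 1) with rfl | hxb
      · have hx1 : b - 1 + 1 = b := by omega
        rw [hx1, if_neg hxa, if_pos rfl]
        split_ifs <;> omega
      · have h' := hF (x + 1) (by omega)
        have hxa' : ¬(x + 1 = a) := by omega
        have hxb' : ¬(x + 1 = b) := by omega
        rw [if_neg hxa, if_neg hxb]
        rw [if_neg hxa', if_neg hxb'] at h'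
        split_ifs <;> omega
  rw [Finset.sum_congr rfl hterm, Finset.sum_add_distrib, Finset.sum_sub_distrib,
    Finset.sum_ite_eq' (Finset.range n) (a - 1), Finset.sum_ite_eq' (Finset.range n) (b - 1),
    if_pos (Finset.mem_range.mpr (show a - 1 < n by omega)),
    if_pos (Finset.mem_range.mpr (show b - 1 < n by omega))]

lemma conjPartition_injective (n : ℕ) : Function.Injective (conj n) :=
  Function.Involutive.injective conjPartition_conj

lemma parts_ne {n : ℕ} {l m : Nat.Partition n} (h : l ≠ m) : l.parts ≠ m.parts :=
  fun h' => h (Nat.Partition.ext h')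

lemma adj_iff {n : ℕ} (l m : Nat.Partition n) :
    (partitionGraph n).Adj l m ↔ l ≠ m ∧ BoxMove l.parts m.parts := by
  rw [partitionGraph, SimpleGraph.fromRel_adj]
  constructor
  · rintro ⟨hne, h | h⟩
    · exact ⟨hne, isTransfer_boxMove (fun p hp => l.parts_pos hp)
        (fun p hp => m.parts_pos hp) (parts_ne hne) h⟩
    · exact ⟨hne, (isTransfer_boxMove (fun p hp => m.parts_pos hp)
        (fun p hp => l.parts_pos hp) (parts_ne (Ne.symm hne)) h).symm⟩
  · rintro ⟨hne, h⟩
    exact ⟨hne, Or.inl (boxMove_isTransfer (fun p hp => l.parts_pos hp)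
      (fun p hp => m.parts_pos hp) h)⟩

lemma adj_conj {n : ℕ} {l m : Nat.Partition n} (h : (partitionGraph n).Adj l m) :
    (partitionGraph n).Adj (conj n l) (conj n m) := by
  rw [adj_iff] at h ⊢
  exact ⟨fun h' => h.1 (conjPartition_injective n h'), boxMove_conj l m h.2⟩

lemma cliqueSet_subset (n : ℕ) (l : Nat.Partition n) :
    {m | ∃ s : Finset (Nat.Partition n),
        (partitionGraph n).IsClique ↑s ∧ l ∈ s ∧ s.card = m}
      ⊆ {m | ∃ s : Finset (Nat.Partition n),
        (partitionGraph n).IsClique ↑s ∧ conj n l ∈ s ∧ s.card = m} := by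
  rintro m ⟨s, hclique, hl, rfl⟩
  refine ⟨s.image (conj n), ?_, ?_, ?_⟩
  · intro x hx y hy hxy
    simp only [Finset.coe_image, Set.mem_image, Finset.mem_coe] at hx hy
    obtain ⟨u, hu, rfl⟩ := hx
    obtain ⟨v, hv, rfl⟩ := hy
    exact adj_conj (hclique hu hv (fun h' => hxy (congrArg (conj n) h')))
  · exact Finset.mem_image_of_mem _ hl
  · exact Finset.card_image_of_injective s (conjPartition_injective n)

lemma tau_conj (n : ℕ) (l : Nat.Partition n) : tau n (conj n l) = tau n l := by
  have h1 := cliqueSet_subset n l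
  have h2 := cliqueSet_subset n (conj n l)
  rw [conjPartition_conj] at h2
  unfold tau maxCliqueSizeThrough
  rw [le_antisymm h1 h2]

/-- For every `n ≥ 1`, the maximal-thickness locus `M_n` is invariant
under conjugation. -/
theorem stmt15 (n : ℕ) (hn : 1 ≤ n) :
    ∀ l : Nat.Partition n, l ∈ maxLocus n ↔ conj n l ∈ maxLocus n := by
  intro l
  simp only [maxLocus, Set.mem_setOf_eq, tau_conj]
end

section
/- The least integer n ≥ 1 such that the partition graph G_n contains a clique of size 4 (equivalently, such that T_{≥3}(n) is nonempty) is n = 7: G_n contains no 4-clique for n ≤ 6, and G_7 contains a 4-clique. -/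
open SimpleGraph

/- ===== auxiliary machinery for stmt18 ===== -/

lemma isTransfer_iff' (s t : Multiset ℕ) : IsTransfer s t ↔
    ∃ a ∈ s, (∃ b ∈ s.erase a,
      t = ((s.erase a).erase b + (if a = 1 then 0 else {a - 1})) + {b + 1}) ∨
      t = ((s.erase a).erase 0 + (if a = 1 then 0 else {a - 1})) + {0 + 1} := by
  constructor
  · rintro ⟨a, ha, b, hb | rfl, ht⟩
    · exact ⟨a, ha, Or.inl ⟨b, hb, ht⟩⟩
    · exact ⟨a, ha, Or.inr ht⟩
  · rintro ⟨a, ha, ⟨b, hb, ht⟩ | ht⟩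
    · exact ⟨a, ha, b, Or.inl hb, ht⟩
    · exact ⟨a, ha, 0, Or.inr rfl, ht⟩

noncomputable instance instDecIsTransfer (s t : Multiset ℕ) : Decidable (IsTransfer s t) := by
  have D : Decidable (∃ a ∈ s, (∃ b ∈ s.erase a,
      t = ((s.erase a).erase b + (if a = 1 then 0 else {a - 1})) + {b + 1}) ∨
      t = ((s.erase a).erase 0 + (if a = 1 then 0 else {a - 1})) + {0 + 1}) :=
    @Multiset.decidableExistsMultiset ℕ s _ fun a =>
      @instDecidableOr _ _
        (@Multiset.decidableExistsMultiset ℕ (s.erase a) _ fun _ => inferInstance)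
        inferInstance
  exact decidable_of_iff' _ (isTransfer_iff' s t)

noncomputable instance instDecAdjPG (n : ℕ) : DecidableRel (partitionGraph n).Adj := fun a b =>
  decidable_of_iff (a ≠ b ∧ (IsTransfer a.parts b.parts ∨ IsTransfer b.parts a.parts)) Iff.rfl

/-- abstract adjacency on parts multisets -/
def AdjRel (x y : Multiset ℕ) : Prop := x ≠ y ∧ (IsTransfer x y ∨ IsTransfer y x)

noncomputable instance instDecAdjRel (x y : Multiset ℕ) : Decidable (AdjRel x y) := by
  unfold AdjRel; infer_instance

/-- the 11 partitions of 6 as multisets -/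
def PL6 : List (Multiset ℕ) :=
  [{6}, {5,1}, {4,2}, {4,1,1}, {3,3}, {3,2,1}, {3,1,1,1}, {2,2,2}, {2,2,1,1},
   {2,1,1,1,1}, {1,1,1,1,1,1}]

set_option maxHeartbeats 4000000 in
lemma complete6 : ∀ c1 ∈ Finset.range 7, ∀ c2 ∈ Finset.range 4, ∀ c3 ∈ Finset.range 3,
    ∀ c4 ∈ Finset.range 2, ∀ c5 ∈ Finset.range 2, ∀ c6 ∈ Finset.range 2,
    c1 + 2*c2 + 3*c3 + 4*c4 + 5*c5 + 6*c6 = 6 →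
    (Multiset.replicate c1 1 + Multiset.replicate c2 2 + Multiset.replicate c3 3 +
     Multiset.replicate c4 4 + Multiset.replicate c5 5 + Multiset.replicate c6 6) ∈ PL6 := by
  decide

set_option maxHeartbeats 4000000 in
lemma noclique6 : ¬ ∃ a ∈ PL6, ∃ b ∈ PL6, AdjRel a b ∧ ∃ c ∈ PL6, AdjRel a c ∧ AdjRel b c ∧
    ∃ d ∈ PL6, AdjRel a d ∧ AdjRel b d ∧ AdjRel c d := by decide

lemma mem_PL6 (m : Multiset ℕ) (hpos : ∀ x ∈ m, 0 < x) (hsum : m.sum = 6) : m ∈ PL6 := by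
  have hbig : ∀ j, 7 ≤ j → m.count j = 0 := by
    intro j hj
    rw [Multiset.count_eq_zero]
    intro hmem
    have := Multiset.le_sum_of_mem hmem
    omega
  have h0 : m.count 0 = 0 := by
    rw [Multiset.count_eq_zero]
    intro hmem
    exact absurd (hpos 0 hmem) (by omega)
  have hm : m = Multiset.replicate (m.count 1) 1 + Multiset.replicate (m.count 2) 2 +
      Multiset.replicate (m.count 3) 3 + Multiset.replicate (m.count 4) 4 +
      Multiset.replicate (m.count 5) 5 + Multiset.replicate (m.count 6) 6 := by
    ext j
    simp only [Multiset.count_add, Multiset.count_replicate]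
    rcases Nat.lt_or_ge j 7 with h | h
    · interval_cases j <;> simp [h0]
    · rw [hbig j h]; split_ifs <;> omega
  have heq : m.count 1 + 2 * m.count 2 + 3 * m.count 3 + 4 * m.count 4 + 5 * m.count 5
      + 6 * m.count 6 = 6 := by
    have h2 : (Multiset.replicate (m.count 1) 1 + Multiset.replicate (m.count 2) 2 +
      Multiset.replicate (m.count 3) 3 + Multiset.replicate (m.count 4) 4 +
      Multiset.replicate (m.count 5) 5 + Multiset.replicate (m.count 6) 6).sum = 6 := by
      rw [← hm]; exact hsum
    simp only [Multiset.sum_add, Multiset.sum_replicate, smul_eq_mul] at h2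
    omega
  have := complete6 (m.count 1) (Finset.mem_range.mpr (by omega))
    (m.count 2) (Finset.mem_range.mpr (by omega)) (m.count 3) (Finset.mem_range.mpr (by omega))
    (m.count 4) (Finset.mem_range.mpr (by omega)) (m.count 5) (Finset.mem_range.mpr (by omega))
    (m.count 6) (Finset.mem_range.mpr (by omega)) heq
  rw [hm]; exact this

lemma IsTransfer.add_right {s t : Multiset ℕ} (r : Multiset ℕ) (h0r : (0:ℕ) ∉ r)
    (h : IsTransfer s t) : IsTransfer (s + r) (t + r) := by
  obtain ⟨a, ha, b, hb, ht⟩ := h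
  refine ⟨a, Multiset.mem_add.mpr (Or.inl ha), b, ?_, ?_⟩
  · rcases hb with hb | hb
    · refine Or.inl ?_
      rw [Multiset.erase_add_left_pos r ha]
      exact Multiset.mem_add.mpr (Or.inl hb)
    · exact Or.inr hb
  · rw [Multiset.erase_add_left_pos r ha]
    by_cases hmem : b ∈ s.erase a
    · rw [Multiset.erase_add_left_pos r hmem, ht]
      abel
    · have hb0 : b = 0 := by
        rcases hb with h' | h'
        · exact absurd h' hmem
        · exact h'
      have hnr : b ∉ r := by rw [hb0]; exact h0r
      have hns : b ∉ s.erase a + r := by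
        rw [Multiset.mem_add]; rintro (h' | h') <;> [exact hmem h'; exact hnr h']
      rw [Multiset.erase_of_notMem hns, Multiset.erase_of_notMem hmem] at *
      rw [ht]
      abel

lemma no4 {n : ℕ} (hn : n ≤ 6) :
    ¬ ∃ s : Finset (Nat.Partition n), (partitionGraph n).IsNClique 4 s := by
  rintro ⟨s, hs⟩
  obtain ⟨hclq, hcard⟩ := hs
  obtain ⟨a, ha⟩ : s.Nonempty := Finset.card_pos.mp (by omega)
  have h3 : (s.erase a).card = 3 := by rw [Finset.card_erase_of_mem ha, hcard]
  obtain ⟨b, c, d, hbc, hbd, hcd, he⟩ := Finset.card_eq_three.mp h3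
  have hb : b ∈ s.erase a := by rw [he]; simp
  have hc : c ∈ s.erase a := by rw [he]; simp
  have hd : d ∈ s.erase a := by rw [he]; simp
  have hab : a ≠ b := fun h => (Finset.ne_of_mem_erase hb) h.symm
  have hac : a ≠ c := fun h => (Finset.ne_of_mem_erase hc) h.symm
  have had : a ≠ d := fun h => (Finset.ne_of_mem_erase hd) h.symm
  have hb' := Finset.mem_of_mem_erase hb
  have hc' := Finset.mem_of_mem_erase hc
  have hd' := Finset.mem_of_mem_erase hd
  set r : Multiset ℕ := Multiset.replicate (6 - n) 1 with hr
  have h0r : (0:ℕ) ∉ r := by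
    intro h
    have := Multiset.eq_of_mem_replicate h
    omega
  have key : ∀ x y : Nat.Partition n, (partitionGraph n).Adj x y →
      AdjRel (x.parts + r) (y.parts + r) := by
    intro x y hxy
    obtain ⟨hne, htr⟩ := (SimpleGraph.fromRel_adj _ x y).mp hxy
    constructor
    · intro h
      exact hne (Nat.Partition.ext (add_right_cancel h))
    · rcases htr with h | h
      · exact Or.inl (h.add_right r h0r)
      · exact Or.inr (h.add_right r h0r)
  have hmem : ∀ x : Nat.Partition n, x.parts + r ∈ PL6 := by
    intro x
    apply mem_PL6
    · intro z hz
      rcases Multiset.mem_add.mp hz with h | h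
      · exact x.parts_pos h
      · rw [Multiset.eq_of_mem_replicate h]; omega
    · rw [Multiset.sum_add, x.parts_sum, hr, Multiset.sum_replicate, smul_eq_mul]
      omega
  have adj : ∀ x y, x ∈ s → y ∈ s → x ≠ y → (partitionGraph n).Adj x y := fun x y hx hy hne =>
    hclq (Finset.mem_coe.mpr hx) (Finset.mem_coe.mpr hy) hne
  exact noclique6 ⟨a.parts + r, hmem a, b.parts + r, hmem b, key a b (adj a b ha hb' hab),
    c.parts + r, hmem c, key a c (adj a c ha hc' hac), key b c (adj b c hb' hc' hbc),
    d.parts + r, hmem d, key a d (adj a d ha hd' had), key b d (adj b d hb' hd' hbd),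
    key c d (adj c d hc' hd' hcd)⟩

def p71 : Nat.Partition 7 := ⟨{4,2,1}, by decide, by decide⟩
def p72 : Nat.Partition 7 := ⟨{3,3,1}, by decide, by decide⟩
def p73 : Nat.Partition 7 := ⟨{3,2,2}, by decide, by decide⟩
def p74 : Nat.Partition 7 := ⟨{3,2,1,1}, by decide, by decide⟩

set_option maxHeartbeats 4000000 in
lemma clique7 : (partitionGraph 7).IsNClique 4 {p71, p72, p73, p74} := by decide

lemma key_iff (n : ℕ) :
    (∃ s : Finset (Nat.Partition n), (partitionGraph n).IsNClique 4 s) ↔ (TGe n 3).Nonempty := by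
  have hbdd : ∀ l : Nat.Partition n, BddAbove {m | ∃ s : Finset (Nat.Partition n),
      (partitionGraph n).IsClique ↑s ∧ l ∈ s ∧ s.card = m} := by
    intro l
    refine ⟨Fintype.card (Nat.Partition n), ?_⟩
    rintro m ⟨t, -, -, rfl⟩
    exact Finset.card_le_univ t
  constructor
  · rintro ⟨s, hs⟩
    obtain ⟨hclq, hcard⟩ := hs
    obtain ⟨l, hl⟩ : s.Nonempty := Finset.card_pos.mp (by omega)
    refine ⟨l, ?_⟩
    have h4 : 4 ≤ maxCliqueSizeThrough n l :=
      le_csSup (hbdd l) ⟨s, hclq, hl, hcard⟩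
    show 3 ≤ tau n l
    unfold tau
    omega
  · rintro ⟨l, hl⟩
    have hl' : 3 ≤ tau n l := hl
    have hne : ({m | ∃ s : Finset (Nat.Partition n),
        (partitionGraph n).IsClique ↑s ∧ l ∈ s ∧ s.card = m} : Set ℕ).Nonempty := by
      refine ⟨1, {l}, ?_, Finset.mem_singleton_self l, Finset.card_singleton l⟩
      rw [Finset.coe_singleton]
      exact Set.pairwise_singleton _ _
    have hS := Nat.sSup_mem hne (hbdd l)
    obtain ⟨s, hclq, hmem, hcard⟩ := hS
    have h4 : 4 ≤ s.card := by
      have : 3 ≤ maxCliqueSizeThrough n l - 1 := hl'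
      unfold maxCliqueSizeThrough at *
      omega
    obtain ⟨t, hts, htc⟩ := Finset.exists_subset_card_eq h4
    exact ⟨t, hclq.subset (Finset.coe_subset.mpr hts), htc⟩

/-- The least integer `n ≥ 1` such that `G_n` contains a clique of size 4
(equivalently, such that `T_{≥3}(n)` is nonempty) is `n = 7`. -/
theorem stmt18 :
    IsLeast {n : ℕ | 1 ≤ n ∧
      ∃ s : Finset (Nat.Partition n), (partitionGraph n).IsNClique 4 s} 7 ∧
    IsLeast {n : ℕ | 1 ≤ n ∧ (TGe n 3).Nonempty} 7 := by
  constructor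
  · constructor
    · exact ⟨by norm_num, {p71, p72, p73, p74}, clique7⟩
    · rintro m ⟨hm1, s, hs⟩
      by_contra h
      exact no4 (by omega) ⟨s, hs⟩
  · constructor
    · exact ⟨by norm_num, (key_iff 7).mp ⟨{p71, p72, p73, p74}, clique7⟩⟩
    · rintro m ⟨hm1, hne⟩
      by_contra h
      exact no4 (by omega) ((key_iff m).mpr hne)
end
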